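/- For n ≥ 5, the braid group B_n is strongly non-indicable: it contains a nontrivial finitely generated perfect subgroup (namely its commutator subgroup [B_n, B_n]). -/

import Mathlib

/-- The braid relations on generators indexed by `Fin (n-1)` (0-indexed: generator `i`
corresponds to the standard generator `σ_{i+1}`). -/
def braidRels (n : ℕ) : Set (FreeGroup (Fin (n - 1))) :=
  {r | (∃ i j : Fin (n - 1), (i : ℕ) + 1 = (j : ℕ) ∧
          r = FreeGroup.of i * FreeGroup.of j * FreeGroup.of i *
              (FreeGroup.of j * FreeGroup.of i * FreeGroup.of j)⁻¹) ∨
       (∃ i j : Fin (n - 1), (i : ℕ) + 2 ≤ (j : ℕ) ∧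
          r = FreeGroup.of i * FreeGroup.of j * (FreeGroup.of j * FreeGroup.of i)⁻¹)}

/-- The braid group `B_n`, presented by the standard generators and braid relations. -/
def BraidGroup (n : ℕ) : Type := PresentedGroup (braidRels n)

instance (n : ℕ) : Group (BraidGroup n) := by unfold BraidGroup; infer_instance

/-- The standard generator `σ_{i+1}` of `B_n` (0-indexed). -/
def braidGen (n : ℕ) (i : Fin (n - 1)) : BraidGroup n := PresentedGroup.of i

/-!
Adjacent generators `σ_k, σ_{k+1}` are conjugate by the braid relation, so every `σ_k σ_0⁻¹` is a
commutator. These elements together with `σ_0 (σ_1 σ_0⁻¹) σ_0⁻¹` generate a subgroup `K` that is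
normalised by `σ_0`, hence normal, and `B_n / K` is cyclic, generated by the image of `σ_0`;
therefore `K = [B_n, B_n]` is finitely generated (Gorin–Lin).

For perfectness, since `σ_3` commutes with `σ_0` and `σ_1` we have
`⁅σ_0, σ_1⁆ = ⁅σ_0 σ_3⁻¹, σ_1 σ_0⁻¹⁆ ∈ [K, K]` (this is where `n ≥ 5` enters). Modulo `[K, K]` the
generators `σ_0, σ_1` therefore commute, the braid relation makes them equal, and propagating along
the chain all `σ_k` become equal; so `B_n / [K, K]` is cyclic and `K ≤ [K, K]`.
Finally `σ_0 ≠ σ_1`, as their images in `Perm (Fin n)` are distinct transpositions, so `K ≠ 1`.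
-/

open Subgroup

open scoped commutatorElement

section Group

variable {G : Type*} [Group G]

theorem mul_inv_mem_commutator_of_braid {a b : G} (h : a * b * a = b * a * b) :
    b * a⁻¹ ∈ commutator G := by
  have hab : b * a⁻¹ = ⁅a * b, a⁆ := by
    rw [commutatorElement_def, h]
    group
  rw [hab, commutator_def]
  exact commutator_mem_commutator (mem_top _) (mem_top _)

theorem eq_of_braid_of_commute {a b : G} (h : a * b * a = b * a * b) (hab : Commute a b) :
    a = b := by
  have h' : a * (a * b) = a * (b * b) :=
    calc a * (a * b) = a * b * a := by rw [mul_assoc, hab.eq]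
      _ = b * a * b := h
      _ = a * (b * b) := by rw [← hab.eq, mul_assoc]
  exact mul_right_cancel (mul_left_cancel h')

theorem mul_mul_inv_eq_of_braid {a b : G} (h : a * b * a = b * a * b) :
    a * b * a⁻¹ = b⁻¹ * a * b := by
  rw [mul_inv_eq_iff_eq_mul, mul_assoc, mul_assoc, eq_inv_mul_iff_mul_eq, ← mul_assoc,
    ← mul_assoc, h]

theorem commutatorElement_mul_inv_eq_of_commute {s t u : G} (hs : Commute u s) (ht : Commute u t) :
    ⁅(u * s⁻¹)⁻¹, t * s⁻¹⁆ = ⁅s, t⁆ := by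
  rw [commutatorElement_def, commutatorElement_def]
  calc (u * s⁻¹)⁻¹ * (t * s⁻¹) * (u * s⁻¹)⁻¹⁻¹ * (t * s⁻¹)⁻¹
      = s * (u⁻¹ * t) * s⁻¹ * (u * t⁻¹) := by group
    _ = s * (t * u⁻¹) * s⁻¹ * (u * t⁻¹) := by rw [ht.inv_left.eq]
    _ = s * t * (u⁻¹ * s⁻¹) * u * t⁻¹ := by group
    _ = s * t * (s⁻¹ * u⁻¹) * u * t⁻¹ := by rw [hs.inv_inv.eq]
    _ = s * t * s⁻¹ * t⁻¹ := by group

theorem commutator_le_of_mul_inv_mem {N : Subgroup G} [N.Normal] {S : Set G}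
    (hS : closure S = ⊤) {g : G} (h : ∀ x ∈ S, x * g⁻¹ ∈ N) : commutator G ≤ N := by
  refine Normal.commutator_le_of_self_sup_commutative_eq_top (H := zpowers g) ?_ inferInstance
  rw [eq_top_iff, ← hS, closure_le]
  intro x hx
  simpa using mul_mem_sup (h x hx) (mem_zpowers g)

theorem mem_normalizer_closure_of_conj_mem {S : Set G} {g : G}
    (h₁ : ∀ x ∈ S, g * x * g⁻¹ ∈ closure S) (h₂ : ∀ x ∈ S, g⁻¹ * x * g ∈ closure S) :
    g ∈ normalizer (closure S : Set G) := by
  rw [mem_normalizer_iff_map_conj_eq, MonoidHom.map_closure]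
  refine le_antisymm ((closure_le _).mpr ?_) ((closure_le _).mpr fun x hx => ?_)
  · rintro _ ⟨x, hx, rfl⟩
    exact h₁ x hx
  · rw [← MonoidHom.map_closure]
    exact ⟨_, h₂ x hx, by simp [mul_assoc]⟩

end Group

structure IsBraidFamily {G : Type*} [Group G] (m : ℕ) (s : ℕ → G) : Prop where
  braid : ∀ k, k + 1 < m → s k * s (k + 1) * s k = s (k + 1) * s k * s (k + 1)
  commute : ∀ k l, k + 2 ≤ l → l < m → Commute (s k) (s l)

def braidCommutatorGens {G : Type*} [Group G] (m : ℕ) (s : ℕ → G) : Set G :=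
  insert (s 0 * (s 1 * (s 0)⁻¹) * (s 0)⁻¹) ((fun k => s k * (s 0)⁻¹) '' Set.Iio m)

theorem braidCommutatorGens_finite {G : Type*} [Group G] (m : ℕ) (s : ℕ → G) :
    (braidCommutatorGens m s).Finite :=
  ((Set.finite_Iio m).image _).insert _

namespace IsBraidFamily

variable {G H : Type*} [Group G] [Group H] {m : ℕ} {s : ℕ → G}

theorem map (hs : IsBraidFamily m s) (f : G →* H) : IsBraidFamily m (f ∘ s) where
  braid k hk := by simpa only [Function.comp_apply, ← map_mul] using congrArg f (hs.braid k hk)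
  commute k l hkl hl := (hs.commute k l hkl hl).map f

theorem mul_inv_mem_commutator (hs : IsBraidFamily m s) {k : ℕ} (hk : k < m) :
    s k * (s 0)⁻¹ ∈ commutator G := by
  induction k with
  | zero => simp
  | succ k ih =>
    have hstep := mul_inv_mem_commutator_of_braid (hs.braid k hk)
    simpa [mul_assoc] using mul_mem hstep (ih (by omega))

theorem eq_zero_of_commute (hs : IsBraidFamily m s) (h01 : Commute (s 0) (s 1)) {k : ℕ}
    (hk : k < m) : s k = s 0 := by
  have hcomm : ∀ k, k + 1 < m → Commute (s k) (s (k + 1)) := by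
    intro k hk
    induction k with
    | zero => exact h01
    | succ k ih =>
      rw [← eq_of_braid_of_commute (hs.braid k (by omega)) (ih (by omega))]
      exact hs.commute k (k + 2) le_rfl hk
  induction k with
  | zero => rfl
  | succ k ih =>
    rw [← ih (by omega)]
    exact (eq_of_braid_of_commute (hs.braid k hk) (hcomm k hk)).symm

theorem commutatorElement_mem_commutator_commutator (hs : IsBraidFamily m s) (hm : 4 ≤ m) :
    ⁅s 0, s 1⁆ ∈ ⁅commutator G, commutator G⁆ := by
  rw [← commutatorElement_mul_inv_eq_of_commute (hs.commute 0 3 (by omega) hm).symm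
    (hs.commute 1 3 le_rfl hm).symm]
  exact commutator_mem_commutator (inv_mem (hs.mul_inv_mem_commutator hm))
    (hs.mul_inv_mem_commutator (by omega))

theorem commutator_commutator_eq (hs : IsBraidFamily m s) (hm : 4 ≤ m)
    (hgen : closure (s '' Set.Iio m) = ⊤) :
    ⁅commutator G, commutator G⁆ = commutator G := by
  refine le_antisymm (commutator_le_self _) ?_
  let π := QuotientGroup.mk' ⁅commutator G, commutator G⁆
  have h01 : Commute (π (s 0)) (π (s 1)) := by
    rw [← commutatorElement_eq_one_iff_commute, ← map_commutatorElement, QuotientGroup.mk'_apply,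
      QuotientGroup.eq_one_iff]
    exact hs.commutatorElement_mem_commutator_commutator hm
  refine commutator_le_of_mul_inv_mem hgen (g := s 0) ?_
  rintro _ ⟨k, hk, rfl⟩
  rw [← QuotientGroup.eq_one_iff, ← QuotientGroup.mk'_apply, map_mul, map_inv, mul_inv_eq_one]
  exact (hs.map π).eq_zero_of_commute h01 hk

theorem mem_normalizer_closure_braidCommutatorGens (hs : IsBraidFamily m s) (hm : 2 ≤ m) :
    s 0 ∈ normalizer (closure (braidCommutatorGens m s) : Set G) := by
  set K := closure (braidCommutatorGens m s)
  set a : ℕ → G := fun k => s k * (s 0)⁻¹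
  set b := s 0 * a 1 * (s 0)⁻¹
  have ha : ∀ k < m, a k ∈ K := fun k hk => subset_closure (Set.mem_insert_of_mem _ ⟨k, hk, rfl⟩)
  have hb : b ∈ K := subset_closure (Set.mem_insert _ _)
  have ha_comm : ∀ k < m, k ≠ 1 → Commute (s 0) (a k) := by
    intro k hkm hk
    refine Commute.mul_right ?_ (Commute.refl _).inv_right
    obtain rfl | hk2 : k = 0 ∨ 2 ≤ k := by omega
    · rfl
    · exact hs.commute 0 k hk2 hkm
  have hb_conj : s 0 * b * (s 0)⁻¹ = (a 1)⁻¹ * b :=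
    calc s 0 * b * (s 0)⁻¹ = s 0 * (s 0 * s 1 * (s 0)⁻¹) * (s 0)⁻¹ * (s 0)⁻¹ := by
          simp only [a, b]; group
      _ = s 0 * ((s 1)⁻¹ * s 0 * s 1) * (s 0)⁻¹ * (s 0)⁻¹ := by
        rw [mul_mul_inv_eq_of_braid (hs.braid 0 hm)]
      _ = (a 1)⁻¹ * b := by simp only [a, b]; group
  have ha_conj : (s 0)⁻¹ * a 1 * s 0 = a 1 * b⁻¹ :=
    calc (s 0)⁻¹ * a 1 * s 0 = (s 0)⁻¹ * s 1 * s 0 * (s 0)⁻¹ := by simp only [a]; group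
      _ = s 1 * s 0 * (s 1)⁻¹ * (s 0)⁻¹ := by
        rw [mul_mul_inv_eq_of_braid (hs.braid 0 hm).symm]
      _ = a 1 * b⁻¹ := by simp only [a, b]; group
  refine mem_normalizer_closure_of_conj_mem ?_ ?_
  · rintro _ (rfl | ⟨k, hk, rfl⟩)
    · rw [hb_conj]
      exact mul_mem (inv_mem (ha 1 hm)) hb
    · by_cases hk1 : k = 1
      · subst hk1
        exact hb
      · rw [(ha_comm k hk hk1).eq, mul_inv_cancel_right]
        exact ha k hk
  · rintro _ (rfl | ⟨k, hk, rfl⟩)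
    · convert ha 1 hm using 1
      simp only [a]
      group
    · by_cases hk1 : k = 1
      · subst hk1
        rw [ha_conj]
        exact mul_mem (ha 1 hm) (inv_mem hb)
      · rw [(ha_comm k hk hk1).inv_left.eq, inv_mul_cancel_right]
        exact ha k hk

theorem normal_closure_braidCommutatorGens (hs : IsBraidFamily m s) (hm : 2 ≤ m)
    (hgen : closure (s '' Set.Iio m) = ⊤) : (closure (braidCommutatorGens m s)).Normal := by
  rw [← normalizer_eq_top_iff, eq_top_iff, ← hgen, closure_le]
  rintro _ ⟨k, hk, rfl⟩
  have ha : s k * (s 0)⁻¹ ∈ closure (braidCommutatorGens m s) :=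
    subset_closure (Set.mem_insert_of_mem _ ⟨k, hk, rfl⟩)
  simpa using mul_mem (le_normalizer ha) (hs.mem_normalizer_closure_braidCommutatorGens hm)

theorem closure_braidCommutatorGens (hs : IsBraidFamily m s) (hm : 2 ≤ m)
    (hgen : closure (s '' Set.Iio m) = ⊤) :
    closure (braidCommutatorGens m s) = commutator G := by
  have := hs.normal_closure_braidCommutatorGens hm hgen
  refine le_antisymm ((closure_le _).mpr ?_) (commutator_le_of_mul_inv_mem hgen (g := s 0) ?_)
  · rintro _ (rfl | ⟨k, hk, rfl⟩)
    · exact (commutator_normal ⊤ ⊤).conj_mem _ (hs.mul_inv_mem_commutator hm) _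
    · exact hs.mul_inv_mem_commutator hk
  · rintro _ ⟨k, hk, rfl⟩
    exact subset_closure (Set.mem_insert_of_mem _ ⟨k, hk, rfl⟩)

end IsBraidFamily

namespace Equiv

variable {α : Type*} [DecidableEq α]

theorem swap_braid {a b c : α} (hab : a ≠ b) (hac : a ≠ c) (hbc : b ≠ c) :
    swap a b * swap b c * swap a b = swap b c * swap a b * swap b c := by
  have h₁ := swap_apply_apply (swap a b) b c
  have h₂ := swap_apply_apply (swap b c) a b
  rw [swap_inv] at h₁ h₂
  rw [← h₁, ← h₂, swap_apply_right, swap_apply_left, swap_apply_of_ne_of_ne hac.symm hbc.symm,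
    swap_apply_of_ne_of_ne hab hac]

theorem swap_commute {a b c d : α} (hac : a ≠ c) (had : a ≠ d) (hbc : b ≠ c) (hbd : b ≠ d) :
    Commute (swap a b) (swap c d) := by
  rw [Commute, SemiconjBy, mul_swap_eq_swap_mul, swap_apply_of_ne_of_ne hac.symm hbc.symm,
    swap_apply_of_ne_of_ne had.symm hbd.symm]

end Equiv

namespace BraidGroup

variable {n : ℕ}

theorem braidGen_braid {i j : Fin (n - 1)} (h : (i : ℕ) + 1 = j) :
    braidGen n i * braidGen n j * braidGen n i = braidGen n j * braidGen n i * braidGen n j := by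
  have hrel := PresentedGroup.mk_eq_mk_of_mul_inv_mem (rels := braidRels n) (Or.inl ⟨i, j, h, rfl⟩)
  simp only [map_mul] at hrel
  exact hrel

theorem braidGen_commute {i j : Fin (n - 1)} (h : (i : ℕ) + 2 ≤ j) :
    Commute (braidGen n i) (braidGen n j) := by
  have hrel := PresentedGroup.mk_eq_mk_of_mul_inv_mem (rels := braidRels n) (Or.inr ⟨i, j, h, rfl⟩)
  simp only [map_mul] at hrel
  exact hrel

def sigma (n k : ℕ) : BraidGroup n :=
  if h : k < n - 1 then braidGen n ⟨k, h⟩ else 1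

theorem sigma_of_lt {k : ℕ} (h : k < n - 1) : sigma n k = braidGen n ⟨k, h⟩ := dif_pos h

theorem isBraidFamily_sigma (n : ℕ) : IsBraidFamily (n - 1) (sigma n) where
  braid k hk := by
    rw [sigma_of_lt hk, sigma_of_lt (by omega)]
    exact braidGen_braid rfl
  commute k l hkl hl := by
    rw [sigma_of_lt hl, sigma_of_lt (by omega)]
    exact braidGen_commute hkl

theorem closure_sigma (n : ℕ) : closure (sigma n '' Set.Iio (n - 1)) = ⊤ := by
  refine eq_top_iff.mpr ((PresentedGroup.closure_range_of (braidRels n)).ge.trans ?_)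
  refine (closure_le _).mpr ?_
  rintro _ ⟨i, rfl⟩
  exact subset_closure ⟨i, i.isLt, sigma_of_lt i.isLt⟩

def adjSwap (n : ℕ) (i : Fin (n - 1)) : Equiv.Perm (Fin n) :=
  Equiv.swap ⟨i, by omega⟩ ⟨i + 1, by omega⟩

theorem lift_adjSwap_eq_one : ∀ r ∈ braidRels n, FreeGroup.lift (adjSwap n) r = 1 := by
  rintro r (⟨i, ⟨j, hj⟩, hij, rfl⟩ | ⟨i, j, hij, rfl⟩) <;>
    simp only [map_mul, map_inv, FreeGroup.lift_apply_of, mul_inv_eq_one, adjSwap]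
  · subst hij
    exact Equiv.swap_braid (by simp) (by simp; omega) (by simp)
  · exact Equiv.swap_commute (by simp; omega) (by simp; omega) (by simp; omega) (by simp; omega)

def toPerm (n : ℕ) : BraidGroup n →* Equiv.Perm (Fin n) :=
  PresentedGroup.toGroup lift_adjSwap_eq_one

theorem toPerm_braidGen (i : Fin (n - 1)) : toPerm n (braidGen n i) = adjSwap n i :=
  PresentedGroup.toGroup.of _

theorem sigma_one_ne_sigma_zero (hn : 3 ≤ n) : sigma n 1 ≠ sigma n 0 := by
  intro h
  have h' := congrArg (fun g => toPerm n g ⟨0, by omega⟩) h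
  simp [sigma_of_lt (show 1 < n - 1 by omega), sigma_of_lt (show 0 < n - 1 by omega),
    toPerm_braidGen, adjSwap, Equiv.swap_apply_def] at h'

theorem commutator_ne_bot (hn : 3 ≤ n) : commutator (BraidGroup n) ≠ ⊥ := by
  intro h
  have := (isBraidFamily_sigma n).mul_inv_mem_commutator (k := 1) (by omega)
  rw [h, mem_bot, mul_inv_eq_one] at this
  exact sigma_one_ne_sigma_zero hn this

end BraidGroup

/-- For `n ≥ 5`, the braid group `B_n` is strongly non-indicable: its commutator subgroup is a
nontrivial finitely generated perfect subgroup. -/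
theorem braid_strongly_non_indicable (n : ℕ) (hn : 5 ≤ n) :
    commutator (BraidGroup n) ≠ ⊥ ∧ (commutator (BraidGroup n)).FG ∧
      ⁅commutator (BraidGroup n), commutator (BraidGroup n)⁆ = commutator (BraidGroup n) := by
  have hs := BraidGroup.isBraidFamily_sigma n
  have hgen := BraidGroup.closure_sigma n
  refine ⟨BraidGroup.commutator_ne_bot (by omega), ?_, hs.commutator_commutator_eq (by omega) hgen⟩
  rw [fg_iff]
  exact ⟨_, hs.closure_braidCommutatorGens (by omega) hgen, braidCommutatorGens_finite _ _⟩
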